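/- arXiv:2108.11489 — 4 statements merged into one kernel-verified Lean document; each statement's English description precedes it below -/
import Mathlib

section
/- Under the assumptions of the previous statement, the minimizer θ̂ of ‖θ‖^{3/2} − wᵀθ over {θ ∈ ℝ^p : y = Xθ} can be expressed as θ̂ = Xᵀ(XXᵀ)^{-1}y + α* (I − Xᵀ(XXᵀ)^{-1}X)w, where α* = sqrt((8‖Pw‖² + sqrt(64‖Pw‖⁴ + 1296‖Xᵀ(XXᵀ)^{-1}y‖²))/81) and P = I − Xᵀ(XXᵀ)^{-1}X. -/
set_option maxHeartbeats 1000000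

open Matrix

section Aux

private lemma core_R' (c d W : ℝ) (hc : 0 ≤ c) (hd : 0 ≤ d)
    (hWd : W ^ 2 ≤ 9 / 4 * d ^ 2) :
    0 ≤ (c ^ 2 + c * d + d ^ 2) ^ 2 - W ^ 2 * (c ^ 2 + 2 / 3 * d * c + 1 / 3 * d ^ 2) := by
  have hq : (0:ℝ) ≤ c ^ 2 + 2 / 3 * d * c + 1 / 3 * d ^ 2 := by positivity
  nlinarith [mul_nonneg (sub_nonneg.2 hWd) hq,
    mul_nonneg (mul_nonneg (mul_nonneg hc hc) hc) hd,
    mul_nonneg (mul_nonneg (mul_nonneg hc hc) hd) hd,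
    mul_nonneg (mul_nonneg (mul_nonneg hc hd) hd) hd,
    pow_nonneg hc 4, pow_nonneg hd 4]

private lemma core_ineq' (c d W s : ℝ) (hc : 0 ≤ c) (hd : 0 ≤ d) (hW : 0 ≤ W) (hs : 0 ≤ s)
    (hWd : W ^ 2 ≤ 9 / 4 * d ^ 2) (hs2 : s ^ 2 = c ^ 4 - d ^ 4 + 4 / 9 * d ^ 2 * W ^ 2) :
    W * s ≤ c ^ 3 - d ^ 3 + 2 / 3 * d * W ^ 2 := by
  have hA : 0 ≤ c ^ 3 - d ^ 3 + 2 / 3 * d * W ^ 2 := by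
    rcases le_or_gt d c with h | h
    · have h3 : d ^ 3 ≤ c ^ 3 := pow_le_pow_left₀ hd h 3
      nlinarith [mul_nonneg (mul_nonneg hd hW) hW]
    · have hc4 : d ^ 4 - 4 / 9 * d ^ 2 * W ^ 2 ≤ c ^ 4 := by nlinarith [sq_nonneg s]
      nlinarith [mul_nonneg (sub_nonneg.2 h.le)
        (show (0:ℝ) ≤ 3/2 * c ^ 3 + 1/2 * c ^ 2 * d + 1/2 * c * d ^ 2 + 1/2 * d ^ 3 by positivity),
        mul_nonneg hd (sq_nonneg W)]
  have hfac : (c ^ 3 - d ^ 3 + 2 / 3 * d * W ^ 2) ^ 2 - W ^ 2 * s ^ 2 =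
      (c - d) ^ 2 * ((c ^ 2 + c * d + d ^ 2) ^ 2 - W ^ 2 * (c ^ 2 + 2 / 3 * d * c + 1 / 3 * d ^ 2)) := by
    linear_combination (-(W ^ 2)) * hs2
  have hB : W ^ 2 * s ^ 2 ≤ (c ^ 3 - d ^ 3 + 2 / 3 * d * W ^ 2) ^ 2 := by
    nlinarith [mul_nonneg (sq_nonneg (c - d)) (core_R' c d W hc hd hWd)]
  nlinarith [mul_nonneg hW hs, hA, hB]

private lemma core_ineq_strict' (c d W s : ℝ) (hc : 0 ≤ c) (hd : 0 ≤ d) (hW : 0 ≤ W) (hs : 0 ≤ s)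
    (hWd : W ^ 2 ≤ 9 / 4 * d ^ 2) (hs2 : s ^ 2 = c ^ 4 - d ^ 4 + 4 / 9 * d ^ 2 * W ^ 2)
    (hne : s ≠ 2 / 3 * d * W) :
    W * s < c ^ 3 - d ^ 3 + 2 / 3 * d * W ^ 2 := by
  have hdW : 0 ≤ 2 / 3 * d * W := by positivity
  have hcd : c ≠ d := by
    intro h
    apply hne
    have h2 : s ^ 2 = (2 / 3 * d * W) ^ 2 := by rw [h] at hs2; linarith [hs2]
    nlinarith [sq_nonneg (s - 2/3*d*W), sq_nonneg (s + 2/3*d*W)]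
  have hA : 0 ≤ c ^ 3 - d ^ 3 + 2 / 3 * d * W ^ 2 :=
    le_trans (mul_nonneg hW hs) (core_ineq' c d W s hc hd hW hs hWd hs2)
  have hfac : (c ^ 3 - d ^ 3 + 2 / 3 * d * W ^ 2) ^ 2 - W ^ 2 * s ^ 2 =
      (c - d) ^ 2 * ((c ^ 2 + c * d + d ^ 2) ^ 2 - W ^ 2 * (c ^ 2 + 2 / 3 * d * c + 1 / 3 * d ^ 2)) := by
    linear_combination (-(W ^ 2)) * hs2
  have hRpos : 0 < (c ^ 2 + c * d + d ^ 2) ^ 2 - W ^ 2 * (c ^ 2 + 2 / 3 * d * c + 1 / 3 * d ^ 2) := by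
    have hq : (0:ℝ) ≤ c ^ 2 + 2 / 3 * d * c + 1 / 3 * d ^ 2 := by positivity
    have hlow : c ^ 4 + 1 / 4 * d ^ 4
        ≤ (c ^ 2 + c * d + d ^ 2) ^ 2 - W ^ 2 * (c ^ 2 + 2 / 3 * d * c + 1 / 3 * d ^ 2) := by
      nlinarith [mul_nonneg (sub_nonneg.2 hWd) hq,
        mul_nonneg (mul_nonneg (mul_nonneg hc hc) hc) hd,
        mul_nonneg (mul_nonneg (mul_nonneg hc hc) hd) hd,
        mul_nonneg (mul_nonneg (mul_nonneg hc hd) hd) hd]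
    have hor : 0 < c ∨ 0 < d := by
      by_contra hcon
      push_neg at hcon
      exact hcd (by linarith [hcon.1, hcon.2, hc, hd] : c = d)
    have hpos : 0 < c ^ 4 + 1 / 4 * d ^ 4 := by
      rcases hor with h | h
      · have : 0 < c ^ 4 := by positivity
        nlinarith [pow_nonneg hd 4]
      · have : 0 < d ^ 4 := by positivity
        nlinarith [pow_nonneg hc 4]
    linarith
  have h1 : 0 < (c - d) ^ 2 :=
    lt_of_le_of_ne (sq_nonneg _) (Ne.symm (pow_ne_zero 2 (sub_ne_zero.2 hcd)))
  have hB : W ^ 2 * s ^ 2 < (c ^ 3 - d ^ 3 + 2 / 3 * d * W ^ 2) ^ 2 := by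
    have := mul_pos h1 hRpos
    linarith [hfac]
  nlinarith [mul_nonneg hW hs, hA, hB]

private lemma pow3_of_quarter' (x : ℝ) (hx : 0 ≤ x) : (x ^ ((1:ℝ)/4)) ^ 3 = x ^ ((3:ℝ)/4) := by
  rw [← Real.rpow_natCast (x ^ ((1:ℝ)/4)) 3, ← Real.rpow_mul hx]
  norm_num

private lemma pow4_of_quarter' (x : ℝ) (hx : 0 ≤ x) : (x ^ ((1:ℝ)/4)) ^ 4 = x := by
  rw [← Real.rpow_natCast (x ^ ((1:ℝ)/4)) 4, ← Real.rpow_mul hx]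
  norm_num

/-- 1-D key inequality. -/
private lemma key_ineq' (a V s : ℝ) (ha : 0 ≤ a) (hV : 0 ≤ V) (hs : 0 ≤ s)
    (α : ℝ) (hα : α = Real.sqrt ((8 * V + Real.sqrt (64 * V ^ 2 + 1296 * a)) / 81)) :
    (a + α ^ 2 * V) ^ ((3:ℝ)/4) - α * V ≤ (a + s ^ 2) ^ ((3:ℝ)/4) - Real.sqrt V * s
    ∧ (s ≠ α * Real.sqrt V →
      (a + α ^ 2 * V) ^ ((3:ℝ)/4) - α * V < (a + s ^ 2) ^ ((3:ℝ)/4) - Real.sqrt V * s) := by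
  have hα0 : 0 ≤ α := hα ▸ Real.sqrt_nonneg _
  have hDnn : (0:ℝ) ≤ 64 * V ^ 2 + 1296 * a := by positivity
  have hD2 : Real.sqrt (64 * V ^ 2 + 1296 * a) ^ 2 = 64 * V ^ 2 + 1296 * a :=
    Real.sq_sqrt hDnn
  have hD0 : 0 ≤ Real.sqrt (64 * V ^ 2 + 1296 * a) := Real.sqrt_nonneg _
  have hargnn : 0 ≤ (8 * V + Real.sqrt (64 * V ^ 2 + 1296 * a)) / 81 := by positivity
  have hα2 : α ^ 2 = (8 * V + Real.sqrt (64 * V ^ 2 + 1296 * a)) / 81 := by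
    rw [hα, Real.sq_sqrt hargnn]
  have hiden : 81 * α ^ 4 = 16 * α ^ 2 * V + 16 * a := by nlinarith [hα2, hD2]
  rcases eq_or_lt_of_le hα0 with hz | hαpos
  · have hz' : α = 0 := hz.symm
    have hVD : 8 * V + Real.sqrt (64 * V ^ 2 + 1296 * a) = 0 := by
      have : α ^ 2 = 0 := by rw [hz']; ring
      rw [hα2] at this; linarith
    have hV0 : V = 0 := by nlinarith
    have ha0 : a = 0 := by
      have hD : Real.sqrt (64 * V ^ 2 + 1296 * a) = 0 := by linarith [hV0 ▸ hVD]
      nlinarith [hD2, hD]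
    subst hV0; subst ha0; subst hz'
    norm_num
    constructor
    · positivity
    · intro hsne
      have hs0 : 0 < s := lt_of_le_of_ne hs (Ne.symm hsne)
      have hspos : 0 < s ^ 2 := by positivity
      exact Real.rpow_pos_of_pos hspos _
  · set W := Real.sqrt V with hWdef
    have hW0 : 0 ≤ W := Real.sqrt_nonneg _
    have hW2 : W ^ 2 = V := Real.sq_sqrt hV
    set d := 3 / 2 * α with hddef
    have hd0 : 0 ≤ d := by positivity
    have hd4 : d ^ 4 = a + α ^ 2 * V := by
      rw [hddef]; nlinarith [hiden]
    have hWd : W ^ 2 ≤ 9 / 4 * d ^ 2 := by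
      have h1 : α ^ 2 * V ≤ 81 / 16 * α ^ 4 := by nlinarith [hiden]
      have h2 : V ≤ 81 / 16 * α ^ 2 := by
        have hα2pos : 0 < α ^ 2 := by positivity
        nlinarith [h1]
      rw [hW2, hddef]; nlinarith
    set c := (a + s ^ 2) ^ ((1:ℝ)/4) with hcdef
    have hasnn : (0:ℝ) ≤ a + s ^ 2 := by positivity
    have hc0 : 0 ≤ c := Real.rpow_nonneg hasnn _
    have hc4 : c ^ 4 = a + s ^ 2 := pow4_of_quarter' _ hasnn
    have hc3 : c ^ 3 = (a + s ^ 2) ^ ((3:ℝ)/4) := pow3_of_quarter' _ hasnn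
    have hd3 : d ^ 3 = (a + α ^ 2 * V) ^ ((3:ℝ)/4) := by
      rw [← hd4, ← Real.rpow_natCast d 4, ← Real.rpow_natCast d 3, ← Real.rpow_mul hd0]
      norm_num
    have hs2 : s ^ 2 = c ^ 4 - d ^ 4 + 4 / 9 * d ^ 2 * W ^ 2 := by
      rw [hc4, hd4, hW2, hddef]; ring
    have hαd : α * W = 2 / 3 * d * W := by rw [hddef]; ring
    have haux : α * V = 2 / 3 * d * W ^ 2 := by rw [← hW2, hddef]; ring
    constructor
    · have := core_ineq' c d W s hc0 hd0 hW0 hs hWd hs2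
      rw [← hc3, ← hd3, haux]; linarith
    · intro hne
      have hne' : s ≠ 2 / 3 * d * W := by rw [← hαd]; exact hne
      have := core_ineq_strict' c d W s hc0 hd0 hW0 hs hWd hs2 hne'
      rw [← hc3, ← hd3, haux]; linarith

private lemma sum_sq_split' {p : ℕ} (u z : Fin p → ℝ) :
    ∑ i, (u i + z i) ^ 2 = (∑ i, u i ^ 2) + 2 * (∑ i, u i * z i) + ∑ i, z i ^ 2 := by
  rw [Finset.mul_sum, ← Finset.sum_add_distrib, ← Finset.sum_add_distrib]
  apply Finset.sum_congr rfl
  intros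
  ring

private lemma sqrt_pow32' (x : ℝ) (hx : 0 ≤ x) :
    (Real.sqrt x) ^ ((3:ℝ)/2) = x ^ ((3:ℝ)/4) := by
  rw [Real.sqrt_eq_rpow, ← Real.rpow_mul hx]
  norm_num

end Aux

/-- The minimizer of ‖θ‖^{3/2} − wᵀθ subject to Xθ = y equals the OLS solution plus
α*·(projection of w onto the null space of X). -/
theorem stmt5 {n p : ℕ} (hnp : n < p)
    (X : Matrix (Fin n) (Fin p) ℝ) (hrank : X.rank = n)
    (y : Fin n → ℝ) (w : Fin p → ℝ) (θhat : Fin p → ℝ)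
    (hfeas : X.mulVec θhat = y)
    (hmin : ∀ θ : Fin p → ℝ, X.mulVec θ = y →
      (Real.sqrt (∑ i, θhat i ^ 2)) ^ ((3 : ℝ) / 2) - ∑ i, w i * θhat i ≤
        (Real.sqrt (∑ i, θ i ^ 2)) ^ ((3 : ℝ) / 2) - ∑ i, w i * θ i) :
    θhat = (Xᵀ * (X * Xᵀ)⁻¹).mulVec y +
      Real.sqrt ((8 * (∑ i, ((1 - Xᵀ * (X * Xᵀ)⁻¹ * X).mulVec w) i ^ 2) +
          Real.sqrt (64 * (∑ i, ((1 - Xᵀ * (X * Xᵀ)⁻¹ * X).mulVec w) i ^ 2) ^ 2 +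
            1296 * (∑ i, ((Xᵀ * (X * Xᵀ)⁻¹).mulVec y) i ^ 2))) / 81) •
        (1 - Xᵀ * (X * Xᵀ)⁻¹ * X).mulVec w := by
  classical
  -- invertibility of X * Xᵀ
  have hXXt : IsUnit (X * Xᵀ) := by
    have hr : (X * Xᵀ).rank = n := by rw [Matrix.rank_self_mul_transpose, hrank]
    rw [← Matrix.mulVec_surjective_iff_isUnit]
    have hrange : LinearMap.range (X * Xᵀ).mulVecLin = ⊤ := by
      apply Submodule.eq_top_of_finrank_eq
      have hfr : Module.finrank ℝ (Fin n → ℝ) = n := by simp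
      rw [hfr]
      exact hr
    intro u
    obtain ⟨v, hv⟩ := LinearMap.range_eq_top.mp hrange u
    exact ⟨v, hv⟩
  have hdet : IsUnit (X * Xᵀ).det := (Matrix.isUnit_iff_isUnit_det _).mp hXXt
  set B := (X * Xᵀ)⁻¹ with hBdef
  have hBsymm : Bᵀ = B := by
    rw [hBdef, Matrix.transpose_nonsing_inv]
    congr 1
    rw [Matrix.transpose_mul, Matrix.transpose_transpose]
  have hXMB : X * (Xᵀ * B) = 1 := by
    rw [← Matrix.mul_assoc, hBdef]
    exact Matrix.mul_nonsing_inv _ hdet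
  set θ0 : Fin p → ℝ := (Xᵀ * B).mulVec y with hθ0def
  set Pm : Matrix (Fin p) (Fin p) ℝ := 1 - Xᵀ * B * X with hPmdef
  set v : Fin p → ℝ := Pm.mulVec w with hvdef
  -- basic matrix facts
  have hXθ0 : X.mulVec θ0 = y := by
    rw [hθ0def, Matrix.mulVec_mulVec, hXMB, Matrix.one_mulVec]
  have hXPm : X * Pm = 0 := by
    rw [hPmdef, Matrix.mul_sub, Matrix.mul_one, ← Matrix.mul_assoc, hXMB,
      Matrix.one_mul, sub_self]
  have hXv : X.mulVec v = 0 := by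
    rw [hvdef, Matrix.mulVec_mulVec, hXPm, Matrix.zero_mulVec]
  have hPmT : Pmᵀ = Pm := by
    rw [hPmdef, Matrix.transpose_sub, Matrix.transpose_one, Matrix.transpose_mul,
      Matrix.transpose_mul, Matrix.transpose_transpose, hBsymm, Matrix.mul_assoc]
  -- orthogonality facts
  have horth : ∀ z : Fin p → ℝ, X.mulVec z = 0 → ∑ i, θ0 i * z i = 0 := by
    intro z hz
    have h1 : (∑ i, θ0 i * z i) = θ0 ⬝ᵥ z := rfl
    rw [h1, hθ0def, dotProduct_comm, Matrix.dotProduct_mulVec,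
      ← Matrix.mulVec_transpose, Matrix.transpose_mul, Matrix.transpose_transpose, hBsymm,
      ← Matrix.mulVec_mulVec, hz, Matrix.mulVec_zero, zero_dotProduct]
  have hwz : ∀ z : Fin p → ℝ, X.mulVec z = 0 → ∑ i, w i * z i = ∑ i, v i * z i := by
    intro z hz
    have h1 : (∑ i, v i * z i) = v ⬝ᵥ z := rfl
    have h2 : (∑ i, w i * z i) = w ⬝ᵥ z := rfl
    have hPz : Pm.mulVec z = z := by
      rw [hPmdef, Matrix.sub_mulVec, Matrix.one_mulVec, ← Matrix.mulVec_mulVec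
        (M := Xᵀ * B) (N := X), hz, Matrix.mulVec_zero, sub_zero]
    rw [h1, h2]
    calc w ⬝ᵥ z = z ⬝ᵥ w := dotProduct_comm _ _
      _ = (Pm.mulVec z) ⬝ᵥ w := by rw [hPz]
      _ = (Pmᵀᵀ.mulVec z) ⬝ᵥ w := by rw [Matrix.transpose_transpose]
      _ = (Matrix.vecMul z Pmᵀ) ⬝ᵥ w := by rw [Matrix.mulVec_transpose]
      _ = z ⬝ᵥ (Pmᵀ.mulVec w) := (Matrix.dotProduct_mulVec _ _ _).symm
      _ = z ⬝ᵥ (Pm.mulVec w) := by rw [hPmT]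
      _ = (Pm.mulVec w) ⬝ᵥ z := dotProduct_comm _ _
  -- scalars
  set a : ℝ := ∑ i, θ0 i ^ 2 with hadef
  set V : ℝ := ∑ i, v i ^ 2 with hVdef
  have ha0 : 0 ≤ a := Finset.sum_nonneg fun i _ => sq_nonneg _
  have hV0 : 0 ≤ V := Finset.sum_nonneg fun i _ => sq_nonneg _
  set α : ℝ := Real.sqrt ((8 * V + Real.sqrt (64 * V ^ 2 + 1296 * a)) / 81) with hαdef
  set z : Fin p → ℝ := θhat - θ0 with hzdef
  have hzi : ∀ i, θhat i = θ0 i + z i := by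
    intro i; rw [hzdef]; simp
  have hXz : X.mulVec z = 0 := by
    rw [hzdef, Matrix.mulVec_sub, hfeas, hXθ0, sub_self]
  set S : ℝ := ∑ i, z i ^ 2 with hSdef
  have hS0 : 0 ≤ S := Finset.sum_nonneg fun i _ => sq_nonneg _
  set T : ℝ := ∑ i, v i * z i with hTdef
  set s : ℝ := Real.sqrt S with hsdef
  have hs0 : 0 ≤ s := Real.sqrt_nonneg _
  have hs2 : s ^ 2 = S := Real.sq_sqrt hS0
  -- the candidate minimizer
  set θstar : Fin p → ℝ := θ0 + α • v with hstardef
  have hstari : ∀ i, θstar i = θ0 i + α * v i := by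
    intro i; rw [hstardef]; simp
  have hXstar : X.mulVec θstar = y := by
    rw [hstardef, Matrix.mulVec_add, hXθ0, Matrix.mulVec_smul, hXv, smul_zero, add_zero]
  -- sum computations
  have hsum_hat_sq : ∑ i, θhat i ^ 2 = a + S := by
    have : ∑ i, θhat i ^ 2 = ∑ i, (θ0 i + z i) ^ 2 :=
      Finset.sum_congr rfl fun i _ => by rw [hzi i]
    rw [this, sum_sq_split', horth z hXz]
    ring
  have hsum_hat_w : ∑ i, w i * θhat i = (∑ i, w i * θ0 i) + T := by
    have h1 : ∑ i, w i * θhat i = ∑ i, (w i * θ0 i + w i * z i) :=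
      Finset.sum_congr rfl fun i _ => by rw [hzi i]; ring
    rw [h1, Finset.sum_add_distrib, hwz z hXz, hTdef]
  have hsum_star_sq : ∑ i, θstar i ^ 2 = a + α ^ 2 * V := by
    have h1 : ∑ i, θstar i ^ 2 = ∑ i, (θ0 i + α * v i) ^ 2 :=
      Finset.sum_congr rfl fun i _ => by rw [hstari i]
    have h2 : ∑ i, θ0 i * (α * v i) = α * ∑ i, θ0 i * v i := by
      rw [Finset.mul_sum]; apply Finset.sum_congr rfl; intros; ring
    have h3 : ∑ i, (α * v i) ^ 2 = α ^ 2 * V := by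
      rw [hVdef, Finset.mul_sum]; apply Finset.sum_congr rfl; intros; ring
    rw [h1, sum_sq_split' θ0 (fun i => α * v i), h2, horth v hXv, h3]
    ring
  have hsum_star_w : ∑ i, w i * θstar i = (∑ i, w i * θ0 i) + α * V := by
    have h1 : ∑ i, w i * θstar i = ∑ i, (w i * θ0 i + w i * (α * v i)) :=
      Finset.sum_congr rfl fun i _ => by rw [hstari i]; ring
    have h2 : ∑ i, w i * (α * v i) = α * ∑ i, w i * v i := by
      rw [Finset.mul_sum]; apply Finset.sum_congr rfl; intros; ring
    have h3 : ∑ i, v i * v i = V := by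
      rw [hVdef]; apply Finset.sum_congr rfl; intros; ring
    rw [h1, Finset.sum_add_distrib, h2, hwz v hXv, h3]
  -- Cauchy-Schwarz
  have hCS : T ≤ Real.sqrt V * s := by
    have h1 : T ^ 2 ≤ V * S := by
      have := Finset.sum_mul_sq_le_sq_mul_sq Finset.univ v z
      rw [hTdef, hVdef, hSdef]
      exact this
    have h2 : T ≤ Real.sqrt (T ^ 2) := by
      rw [Real.sqrt_sq_eq_abs]; exact le_abs_self _
    calc T ≤ Real.sqrt (T ^ 2) := h2
      _ ≤ Real.sqrt (V * S) := Real.sqrt_le_sqrt h1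
      _ = Real.sqrt V * s := by rw [hsdef, Real.sqrt_mul hV0]
  -- the key inequality, instantiated
  obtain ⟨hkey, hkeystrict⟩ := key_ineq' a V s ha0 hV0 hs0 α hαdef
  -- value of f at θhat vs θstar from hmin
  have hmin' := hmin θstar hXstar
  rw [hsum_hat_sq, hsum_hat_w, hsum_star_sq, hsum_star_w,
    sqrt_pow32' _ (by positivity : (0:ℝ) ≤ a + S),
    sqrt_pow32' _ (by positivity : (0:ℝ) ≤ a + α ^ 2 * V)] at hmin'
  -- therefore (a+S)^{3/4} - T ≤ (a+α²V)^{3/4} - αV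
  have hmin'' : (a + S) ^ ((3:ℝ)/4) - T ≤ (a + α ^ 2 * V) ^ ((3:ℝ)/4) - α * V := by
    linarith
  have hSs : a + S = a + s ^ 2 := by rw [hs2]
  -- main case analysis
  by_cases hseq : s = α * Real.sqrt V
  · by_cases hTeq : T = Real.sqrt V * s
    · -- equality case : θhat = θstar
      by_cases hVz : V = 0
      · -- v = 0, z = 0
        have hv0 : ∀ i, v i = 0 := by
          intro i
          have h1 : ∀ j ∈ Finset.univ, (0:ℝ) ≤ v j ^ 2 := fun j _ => sq_nonneg _
          have h2 := (Finset.sum_eq_zero_iff_of_nonneg h1).mp (hVdef ▸ hVz) i (Finset.mem_univ i)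
          exact (pow_eq_zero_iff two_ne_zero).mp h2
        have hsz : s = 0 := by rw [hseq, hVz, Real.sqrt_zero, mul_zero]
        have hSz : S = 0 := by rw [← hs2, hsz]; ring
        have hz0 : ∀ i, z i = 0 := by
          intro i
          have h1 : ∀ j ∈ Finset.univ, (0:ℝ) ≤ z j ^ 2 := fun j _ => sq_nonneg _
          have h2 := (Finset.sum_eq_zero_iff_of_nonneg h1).mp (hSdef ▸ hSz) i (Finset.mem_univ i)
          exact (pow_eq_zero_iff two_ne_zero).mp h2
        funext i
        rw [hzi i, hz0 i]
        show θ0 i + 0 = (θ0 + α • v) i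
        simp [hv0 i]
      · have hVpos : 0 < V := lt_of_le_of_ne hV0 (Ne.symm hVz)
        have hVV : Real.sqrt V * Real.sqrt V = V := Real.mul_self_sqrt hV0
        have hTV : T = α * V := by
          rw [hTeq, hseq]; linear_combination α * hVV
        have hS_eq : S = α ^ 2 * V := by
          rw [← hs2, hseq]
          linear_combination α ^ 2 * (Real.mul_self_sqrt hV0)
        have hzero : ∑ i, (z i - α * v i) ^ 2 = 0 := by
          have hexp : ∑ i, (z i - α * v i) ^ 2 =
              (∑ i, z i ^ 2) - 2 * α * (∑ i, v i * z i) + α ^ 2 * (∑ i, v i ^ 2) := by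
            rw [Finset.mul_sum, Finset.mul_sum, ← Finset.sum_sub_distrib,
              ← Finset.sum_add_distrib]
            apply Finset.sum_congr rfl
            intros
            ring
          rw [hexp, ← hSdef, ← hTdef, ← hVdef, hS_eq, hTV]
          ring
        have hzv : ∀ i, z i = α * v i := by
          intro i
          have h1 : ∀ j ∈ Finset.univ, (0:ℝ) ≤ (z j - α * v j) ^ 2 := fun j _ => sq_nonneg _
          have h2 := (Finset.sum_eq_zero_iff_of_nonneg h1).mp hzero i (Finset.mem_univ i)
          have h3 := (pow_eq_zero_iff two_ne_zero).mp h2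
          linarith
        funext i
        rw [hzi i, hzv i]
        show θ0 i + α * v i = (θ0 + α • v) i
        simp
    · -- T < √V s : strict contradiction
      exfalso
      have hTlt : T < Real.sqrt V * s := lt_of_le_of_ne hCS hTeq
      have : (a + α ^ 2 * V) ^ ((3:ℝ)/4) - α * V < (a + S) ^ ((3:ℝ)/4) - T := by
        rw [hSs]
        calc (a + α ^ 2 * V) ^ ((3:ℝ)/4) - α * V
            ≤ (a + s ^ 2) ^ ((3:ℝ)/4) - Real.sqrt V * s := hkey
          _ < (a + s ^ 2) ^ ((3:ℝ)/4) - T := by linarith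
      linarith
  · -- s ≠ α √V : strict contradiction
    exfalso
    have : (a + α ^ 2 * V) ^ ((3:ℝ)/4) - α * V < (a + S) ^ ((3:ℝ)/4) - T := by
      rw [hSs]
      calc (a + α ^ 2 * V) ^ ((3:ℝ)/4) - α * V
          < (a + s ^ 2) ^ ((3:ℝ)/4) - Real.sqrt V * s := hkeystrict hseq
        _ ≤ (a + s ^ 2) ^ ((3:ℝ)/4) - T := by linarith
    linarith
end

section
/- Let α* = sqrt((8‖w̃‖² + sqrt(64‖w̃‖⁴ + 1296‖ỹ‖²))/81) for vectors w̃ and ỹ with ‖w̃‖ ≤ ‖w‖. Then (2/3)·‖ỹ‖^{1/2} ≤ α* ≤ (2/3)·‖ỹ‖^{1/2} · sqrt( sqrt(1 + 4‖w‖⁴/(81‖ỹ‖²)) + 2‖w‖²/(9‖ỹ‖) ), provided ‖ỹ‖ > 0. -/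
/-- Upper and lower bounds on α* in terms of ‖ỹ‖ and ‖w‖. -/
theorem stmt6 {m k : ℕ} (wt yt : EuclideanSpace ℝ (Fin m)) (w : EuclideanSpace ℝ (Fin k))
    (hyt : 0 < ‖yt‖) (hw : ‖wt‖ ≤ ‖w‖) (αstar : ℝ)
    (hα : αstar =
      Real.sqrt ((8 * ‖wt‖ ^ 2 + Real.sqrt (64 * ‖wt‖ ^ 4 + 1296 * ‖yt‖ ^ 2)) / 81)) :
    2 / 3 * Real.sqrt ‖yt‖ ≤ αstar ∧
    αstar ≤ 2 / 3 * Real.sqrt ‖yt‖ *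
      Real.sqrt (Real.sqrt (1 + 4 * ‖w‖ ^ 4 / (81 * ‖yt‖ ^ 2)) + 2 * ‖w‖ ^ 2 / (9 * ‖yt‖)) := by
  set a := ‖wt‖ with ha_def
  set y := ‖yt‖ with hy_def
  set W := ‖w‖ with hW_def
  have ha : (0:ℝ) ≤ a := norm_nonneg _
  have hy : (0:ℝ) < y := hyt
  have hW0 : (0:ℝ) ≤ W := le_trans ha hw
  set S : ℝ := Real.sqrt (1 + 4 * W ^ 4 / (81 * y ^ 2)) + 2 * W ^ 2 / (9 * y) with hS_def
  have hS : (0:ℝ) ≤ S := by positivity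
  constructor
  · -- lower bound
    have e1 : (2:ℝ)/3 * Real.sqrt y = Real.sqrt (4*y/9) := by
      rw [show 4*y/9 = ((2:ℝ)/3)^2 * y by ring, Real.sqrt_mul (by positivity),
        Real.sqrt_sq (by norm_num)]
    have hs : (36:ℝ)*y ≤ Real.sqrt (64*a^4+1296*y^2) := by
      rw [show (36:ℝ)*y = Real.sqrt ((36*y)^2) from (Real.sqrt_sq (by positivity)).symm]
      apply Real.sqrt_le_sqrt
      nlinarith [pow_nonneg ha 4]
    rw [hα, e1]
    apply Real.sqrt_le_sqrt
    nlinarith [sq_nonneg a]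
  · -- upper bound
    have key : Real.sqrt (4*W^4+81*y^2) = 9*y*Real.sqrt (1+4*W^4/(81*y^2)) := by
      rw [show 1+4*W^4/(81*y^2) = (4*W^4+81*y^2)/(9*y)^2 by field_simp; ring,
        Real.sqrt_div (by positivity), Real.sqrt_sq (by positivity)]
      field_simp
    have h64 : Real.sqrt (64*W^4+1296*y^2) = 4*Real.sqrt (4*W^4+81*y^2) := by
      rw [show 64*W^4+1296*y^2 = (4:ℝ)^2*(4*W^4+81*y^2) by ring,
        Real.sqrt_mul (by norm_num), Real.sqrt_sq (by norm_num)]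
    have hR2 : (2/3*Real.sqrt y*Real.sqrt S)^2
        = (8*W^2 + Real.sqrt (64*W^4+1296*y^2))/81 := by
      rw [mul_pow, mul_pow, Real.sq_sqrt hy.le, Real.sq_sqrt hS, h64, key, hS_def]
      field_simp
      ring
    have hmono : Real.sqrt (64*a^4+1296*y^2) ≤ Real.sqrt (64*W^4+1296*y^2) := by
      apply Real.sqrt_le_sqrt
      nlinarith [pow_le_pow_left₀ ha hw 4]
    have ha2 : a^2 ≤ W^2 := pow_le_pow_left₀ ha hw 2
    rw [hα]
    calc Real.sqrt ((8 * a ^ 2 + Real.sqrt (64 * a ^ 4 + 1296 * y ^ 2)) / 81)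
        ≤ Real.sqrt ((2/3*Real.sqrt y*Real.sqrt S)^2) := by
          apply Real.sqrt_le_sqrt
          rw [hR2]
          linarith
      _ = 2/3*Real.sqrt y*Real.sqrt S := Real.sqrt_sq (by positivity)
end

section
/- Let H and T be symmetric positive semidefinite n×n real matrices with T positive definite, and let A = H + T. If H has rank at most k, then |Tr(A^{-1}) − Tr(T^{-1})| ≤ k · μ_1(T)/μ_n(T)², where μ_1(T) and μ_n(T) are the largest and smallest eigenvalues of T. -/
open Matrix

section Aux

variable {n : ℕ}

lemma aux_conj {M : Matrix (Fin n) (Fin n) ℝ} (hM : M.IsHermitian) (c : ℝ) :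
    c • (1 : Matrix (Fin n) (Fin n) ℝ) - M
      = (hM.eigenvectorUnitary : Matrix (Fin n) (Fin n) ℝ)
        * Matrix.diagonal (fun i => c - hM.eigenvalues i)
        * star (hM.eigenvectorUnitary : Matrix (Fin n) (Fin n) ℝ) := by
  have hVV : (hM.eigenvectorUnitary : Matrix (Fin n) (Fin n) ℝ)
      * star (hM.eigenvectorUnitary : Matrix (Fin n) (Fin n) ℝ) = 1 :=
    Matrix.mem_unitaryGroup_iff.mp hM.eigenvectorUnitary.2
  have hdiag : Matrix.diagonal (fun i => c - hM.eigenvalues i)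
      = Matrix.diagonal (fun _ => c)
        - Matrix.diagonal (RCLike.ofReal ∘ hM.eigenvalues) := by
    rw [← Matrix.diagonal_sub]
    congr 1
  conv_lhs => rw [hM.spectral_theorem, Unitary.conjStarAlgAut_apply]
  rw [hdiag, Matrix.mul_sub, Matrix.sub_mul, ← Matrix.smul_one_eq_diagonal,
    Matrix.mul_smul, Matrix.mul_one, Matrix.smul_mul, hVV]

/-- Spectral bound: if all eigenvalues of a Hermitian matrix are ≤ c then c•1 - M is PSD. -/
lemma aux_psd_of_eig_le {M : Matrix (Fin n) (Fin n) ℝ} (hM : M.IsHermitian)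
    {c : ℝ} (h : ∀ i, hM.eigenvalues i ≤ c) :
    (c • (1 : Matrix (Fin n) (Fin n) ℝ) - M).PosSemidef := by
  rw [aux_conj hM c, Matrix.star_eq_conjTranspose]
  exact (Matrix.posSemidef_diagonal_iff.mpr
    fun i => sub_nonneg.mpr (h i)).mul_mul_conjTranspose_same _

/-- Spectral bound: if all eigenvalues of a Hermitian matrix are ≥ d then M - d•1 is PSD. -/
lemma aux_psd_of_le_eig {M : Matrix (Fin n) (Fin n) ℝ} (hM : M.IsHermitian)
    {d : ℝ} (h : ∀ i, d ≤ hM.eigenvalues i) :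
    (M - d • (1 : Matrix (Fin n) (Fin n) ℝ)).PosSemidef := by
  have hVV : (hM.eigenvectorUnitary : Matrix (Fin n) (Fin n) ℝ)
      * star (hM.eigenvectorUnitary : Matrix (Fin n) (Fin n) ℝ) = 1 :=
    Matrix.mem_unitaryGroup_iff.mp hM.eigenvectorUnitary.2
  have hdiag : Matrix.diagonal (fun i => hM.eigenvalues i - d)
      = Matrix.diagonal (RCLike.ofReal ∘ hM.eigenvalues)
        - Matrix.diagonal (fun _ => d) := by
    rw [← Matrix.diagonal_sub]
    congr 1
  have key : M - d • (1 : Matrix (Fin n) (Fin n) ℝ)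
      = (hM.eigenvectorUnitary : Matrix (Fin n) (Fin n) ℝ)
        * Matrix.diagonal (fun i => hM.eigenvalues i - d)
        * star (hM.eigenvectorUnitary : Matrix (Fin n) (Fin n) ℝ) := by
    conv_lhs => rw [hM.spectral_theorem, Unitary.conjStarAlgAut_apply]
    rw [hdiag, Matrix.mul_sub, Matrix.sub_mul, ← Matrix.smul_one_eq_diagonal,
      Matrix.mul_smul, Matrix.mul_one, Matrix.smul_mul, hVV]
  rw [key, Matrix.star_eq_conjTranspose]
  exact (Matrix.posSemidef_diagonal_iff.mpr
    fun i => sub_nonneg.mpr (h i)).mul_mul_conjTranspose_same _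

/-- If c•1 - B is PSD then every eigenvalue of B is ≤ c. -/
lemma aux_eig_le_of_psd {B : Matrix (Fin n) (Fin n) ℝ} (hB : B.IsHermitian) {c : ℝ}
    (h : (c • (1 : Matrix (Fin n) (Fin n) ℝ) - B).PosSemidef) (i : Fin n) :
    hB.eigenvalues i ≤ c := by
  set v : Fin n → ℝ := ⇑(hB.eigenvectorBasis i) with hv
  have hvv : dotProduct v v = 1 := by
    have h1 : ‖hB.eigenvectorBasis i‖ = 1 := hB.eigenvectorBasis.orthonormal.1 i
    have h2 : (inner ℝ (hB.eigenvectorBasis i) (hB.eigenvectorBasis i) : ℝ) = 1 := by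
      rw [real_inner_self_eq_norm_sq, h1, one_pow]
    rw [EuclideanSpace.inner_eq_star_dotProduct] at h2
    simpa [hv] using h2
  have heig : hB.eigenvalues i = dotProduct v (B *ᵥ v) := by
    have h3 := hB.eigenvalues_eq i
    simpa [hv] using h3
  have hq := h.dotProduct_mulVec_nonneg v
  rw [Matrix.sub_mulVec, Matrix.smul_mulVec, Matrix.one_mulVec,
    dotProduct_sub, dotProduct_smul] at hq
  simp only [star_trivial, smul_eq_mul] at hq
  rw [hvv] at hq
  rw [heig]
  linarith

/-- trace of a Hermitian matrix is the sum of its eigenvalues. -/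
lemma aux_trace_eq_sum_eig {B : Matrix (Fin n) (Fin n) ℝ} (hB : B.IsHermitian) :
    B.trace = ∑ i, hB.eigenvalues i := by
  have hVV : star (hB.eigenvectorUnitary : Matrix (Fin n) (Fin n) ℝ)
      * (hB.eigenvectorUnitary : Matrix (Fin n) (Fin n) ℝ) = 1 :=
    (Matrix.mem_unitaryGroup_iff').mp hB.eigenvectorUnitary.2
  nth_rewrite 1 [hB.spectral_theorem, Unitary.conjStarAlgAut_apply]
  rw [Matrix.trace_mul_cycle, hVV, Matrix.one_mul, Matrix.trace_diagonal]
  simp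

/-- Loewner antitonicity of inverse. -/
lemma aux_inv_antitone {S R : Matrix (Fin n) (Fin n) ℝ} (hS : S.PosDef) (hR : R.PosDef)
    (h : (S - R).PosSemidef) : (R⁻¹ - S⁻¹).PosSemidef := by
  have hSdet : IsUnit S.det := isUnit_iff_ne_zero.mpr hS.det_pos.ne'
  have hRdet : IsUnit R.det := isUnit_iff_ne_zero.mpr hR.det_pos.ne'
  have hS1 : S * S⁻¹ = 1 := Matrix.mul_nonsing_inv _ hSdet
  have hS2 : S⁻¹ * S = 1 := Matrix.nonsing_inv_mul _ hSdet
  have hR1 : R * R⁻¹ = 1 := Matrix.mul_nonsing_inv _ hRdet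
  have hR2 : R⁻¹ * R = 1 := Matrix.nonsing_inv_mul _ hRdet
  have hSinv : S⁻¹.IsHermitian := hS.inv.isHermitian
  have hDher : (S - R).IsHermitian := h.isHermitian
  have key : R⁻¹ - S⁻¹
      = S⁻¹ * (S - R) * S⁻¹ + ((S - R) * S⁻¹)ᴴ * R⁻¹ * ((S - R) * S⁻¹) := by
    have hherm : ((S - R) * S⁻¹)ᴴ = S⁻¹ * (S - R) := by
      rw [Matrix.conjTranspose_mul, hDher.eq, hSinv.eq]
    rw [hherm]
    have cS1 : ∀ X : Matrix (Fin n) (Fin n) ℝ, S * (S⁻¹ * X) = X := fun X => by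
      rw [← Matrix.mul_assoc, hS1, Matrix.one_mul]
    have cS2 : ∀ X : Matrix (Fin n) (Fin n) ℝ, S⁻¹ * (S * X) = X := fun X => by
      rw [← Matrix.mul_assoc, hS2, Matrix.one_mul]
    have cR1 : ∀ X : Matrix (Fin n) (Fin n) ℝ, R * (R⁻¹ * X) = X := fun X => by
      rw [← Matrix.mul_assoc, hR1, Matrix.one_mul]
    have cR2 : ∀ X : Matrix (Fin n) (Fin n) ℝ, R⁻¹ * (R * X) = X := fun X => by
      rw [← Matrix.mul_assoc, hR2, Matrix.one_mul]
    simp only [Matrix.mul_sub, Matrix.sub_mul, Matrix.mul_assoc, hS1, hS2, hR1, hR2,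
      cS1, cS2, cR1, cR2, Matrix.mul_one, Matrix.one_mul]
    abel
  rw [key]
  have t1 : (S⁻¹ * (S - R) * S⁻¹).PosSemidef := by
    have := h.mul_mul_conjTranspose_same S⁻¹
    rwa [Matrix.conjTranspose_nonsing_inv, hS.isHermitian.eq] at this
  have t2 : (((S - R) * S⁻¹)ᴴ * R⁻¹ * ((S - R) * S⁻¹)).PosSemidef :=
    hR.inv.posSemidef.conjTranspose_mul_mul_same _
  exact t1.add t2

end Aux

/-- If H ⪰ 0 has rank ≤ k, T ≻ 0 and A = H + T, then
|Tr(A⁻¹) − Tr(T⁻¹)| ≤ k·μ₁(T)/μₙ(T)². -/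
theorem stmt9 {n k : ℕ} (hn : 0 < n)
    (H T : Matrix (Fin n) (Fin n) ℝ)
    (hH : H.PosSemidef) (hHrank : H.rank ≤ k) (hT : T.PosDef) :
    |((H + T)⁻¹).trace - (T⁻¹).trace| ≤
      (k : ℝ) * (⨆ i, hT.1.eigenvalues i) / (⨅ i, hT.1.eigenvalues i) ^ 2 := by
  haveI : Nonempty (Fin n) := ⟨⟨0, hn⟩⟩
  set A : Matrix (Fin n) (Fin n) ℝ := H + T with hAdef
  have hA : A.PosDef := Matrix.PosDef.posSemidef_add hH hT
  set μmin : ℝ := ⨅ i, hT.1.eigenvalues i with hμmin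
  set μmax : ℝ := ⨆ i, hT.1.eigenvalues i with hμmax
  have hbddb : BddBelow (Set.range hT.1.eigenvalues) := (Set.finite_range _).bddBelow
  have hbdda : BddAbove (Set.range hT.1.eigenvalues) := (Set.finite_range _).bddAbove
  have hμmin_le : ∀ i, μmin ≤ hT.1.eigenvalues i := fun i => ciInf_le hbddb i
  have hle_μmax : ∀ i, hT.1.eigenvalues i ≤ μmax := fun i => le_ciSup hbdda i
  have hμmin_pos : 0 < μmin := by
    obtain ⟨i0, hi0⟩ := exists_eq_ciInf_of_finite (f := hT.1.eigenvalues)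
    rw [hμmin, ← hi0]; exact hT.eigenvalues_pos i0
  have hμminμmax : μmin ≤ μmax := le_trans (hμmin_le (Classical.arbitrary _)) (hle_μmax _)
  -- invertibility
  have hAdet : IsUnit A.det := isUnit_iff_ne_zero.mpr hA.det_pos.ne'
  have hTdet : IsUnit T.det := isUnit_iff_ne_zero.mpr hT.det_pos.ne'
  -- B = T⁻¹ - A⁻¹
  set B : Matrix (Fin n) (Fin n) ℝ := T⁻¹ - A⁻¹ with hBdef
  have hATpsd : (A - T).PosSemidef := by
    have : A - T = H := by rw [hAdef, add_sub_cancel_right]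
    rw [this]; exact hH
  have hBpsd : B.PosSemidef := aux_inv_antitone hA hT hATpsd
  -- scalar matrix
  have hscal : (μmin • (1 : Matrix (Fin n) (Fin n) ℝ)).PosDef := by
    rw [Matrix.smul_one_eq_diagonal]
    exact Matrix.posDef_diagonal_iff.mpr fun i => hμmin_pos
  have hscal_inv : (μmin • (1 : Matrix (Fin n) (Fin n) ℝ))⁻¹
      = μmin⁻¹ • (1 : Matrix (Fin n) (Fin n) ℝ) := by
    apply Matrix.inv_eq_right_inv
    rw [Matrix.smul_mul, Matrix.mul_smul, Matrix.one_mul, smul_smul,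
      mul_inv_cancel₀ hμmin_pos.ne']
    simp
  have hTlow : (T - μmin • (1 : Matrix (Fin n) (Fin n) ℝ)).PosSemidef :=
    aux_psd_of_le_eig hT.1 hμmin_le
  have hTinv_up : (μmin⁻¹ • (1 : Matrix (Fin n) (Fin n) ℝ) - T⁻¹).PosSemidef := by
    have := aux_inv_antitone hT hscal hTlow
    rwa [hscal_inv] at this
  have hBup : (μmin⁻¹ • (1 : Matrix (Fin n) (Fin n) ℝ) - B).PosSemidef := by
    have : μmin⁻¹ • (1 : Matrix (Fin n) (Fin n) ℝ) - B
        = (μmin⁻¹ • (1 : Matrix (Fin n) (Fin n) ℝ) - T⁻¹) + A⁻¹ := by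
      rw [hBdef]; abel
    rw [this]
    exact hTinv_up.add hA.inv.posSemidef
  -- eigenvalue bounds for B
  have hBher : B.IsHermitian := hBpsd.isHermitian
  have hBeig_nonneg : ∀ i, 0 ≤ hBher.eigenvalues i := fun i => hBpsd.eigenvalues_nonneg i
  have hBeig_le : ∀ i, hBher.eigenvalues i ≤ μmin⁻¹ := fun i => aux_eig_le_of_psd hBher hBup i
  -- rank of B
  have hBrank : B.rank ≤ k := by
    have hBeq : B = A⁻¹ * H * T⁻¹ := by
      have h1 : A⁻¹ * A = 1 := Matrix.nonsing_inv_mul _ hAdet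
      have h2 : T * T⁻¹ = 1 := Matrix.mul_nonsing_inv _ hTdet
      have : A⁻¹ * H * T⁻¹ = A⁻¹ * (A - T) * T⁻¹ := by
        rw [hAdef, add_sub_cancel_right]
      rw [this, Matrix.mul_sub, Matrix.sub_mul, h1, Matrix.one_mul,
        Matrix.mul_assoc A⁻¹ T T⁻¹, h2, Matrix.mul_one, hBdef]
    calc B.rank = (A⁻¹ * H * T⁻¹).rank := by rw [hBeq]
      _ ≤ (A⁻¹ * H).rank := Matrix.rank_mul_le_left _ _
      _ ≤ H.rank := Matrix.rank_mul_le_right _ _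
      _ ≤ k := hHrank
  -- trace bound
  have htraceB : B.trace = ∑ i, hBher.eigenvalues i := aux_trace_eq_sum_eig hBher
  have hcard : Fintype.card {i // hBher.eigenvalues i ≠ 0} ≤ k := by
    rw [← hBher.rank_eq_card_non_zero_eigs]; exact hBrank
  have hsum_le : ∑ i, hBher.eigenvalues i ≤ (k : ℝ) * μmin⁻¹ := by
    classical
    have hfilter : ∑ i, hBher.eigenvalues i
        = ∑ i ∈ Finset.univ.filter (fun i => hBher.eigenvalues i ≠ 0), hBher.eigenvalues i := by
      rw [Finset.sum_filter_ne_zero]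
    have hcard' : (Finset.univ.filter (fun i => hBher.eigenvalues i ≠ 0)).card ≤ k := by
      rw [← Fintype.card_subtype]
      exact hcard
    have hle : ∑ i ∈ Finset.univ.filter (fun i => hBher.eigenvalues i ≠ 0), hBher.eigenvalues i
        ≤ (Finset.univ.filter (fun i => hBher.eigenvalues i ≠ 0)).card • μmin⁻¹ :=
      Finset.sum_le_card_nsmul _ _ _ (fun i _ => hBeig_le i)
    rw [nsmul_eq_mul] at hle
    rw [hfilter]
    refine hle.trans ?_
    have : (0:ℝ) ≤ μmin⁻¹ := (inv_pos.mpr hμmin_pos).le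
    exact mul_le_mul_of_nonneg_right (by exact_mod_cast hcard') this
  have htraceB_nonneg : 0 ≤ B.trace := by
    rw [htraceB]; exact Finset.sum_nonneg fun i _ => hBeig_nonneg i
  have htrace_sub : B.trace = (T⁻¹).trace - (A⁻¹).trace := by
    rw [hBdef, Matrix.trace_sub]
  have habs : |((H + T)⁻¹).trace - (T⁻¹).trace| = B.trace := by
    rw [← hAdef, abs_sub_comm, ← htrace_sub, abs_of_nonneg htraceB_nonneg]
  rw [habs]
  have hstep : B.trace ≤ (k : ℝ) * μmin⁻¹ := htraceB ▸ hsum_le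
  refine hstep.trans ?_
  rw [div_eq_mul_inv, mul_assoc]
  have hk : (0:ℝ) ≤ (k:ℝ) := Nat.cast_nonneg _
  refine mul_le_mul_of_nonneg_left ?_ hk
  rw [sq]
  rw [mul_inv]
  calc μmin⁻¹ = μmin * (μmin⁻¹ * μmin⁻¹) := by
        rw [← mul_assoc, mul_inv_cancel₀ hμmin_pos.ne', one_mul]
    _ ≤ μmax * (μmin⁻¹ * μmin⁻¹) := by
        refine mul_le_mul_of_nonneg_right hμminμmax ?_
        positivity
end

section
/- Let B = (I − Xᵀ(XXᵀ)^{-1}X) Σ (I − Xᵀ(XXᵀ)^{-1}X), where X ∈ ℝ^{n×p} has full row rank and Σ ∈ ℝ^{p×p} is symmetric. Then ‖B‖_op ≤ ‖Σ − XᵀX/n‖_op. -/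
open Matrix

open scoped Matrix.Norms.L2Operator in
lemma l2OpNorm_eq_norm' {q : ℕ} (M : Matrix (Fin q) (Fin q) ℝ) :
    ‖LinearMap.toContinuousLinearMap (Matrix.toEuclideanLin M)‖ = ‖M‖ := by
  rw [Matrix.l2_opNorm_def]; rfl

/-- The ℓ²-operator norm of a square real matrix. -/
noncomputable def l2OpNorm {p : ℕ} (M : Matrix (Fin p) (Fin p) ℝ) : ℝ :=
  ‖LinearMap.toContinuousLinearMap (Matrix.toEuclideanLin M)‖

open scoped Matrix.Norms.L2Operator in
/-- ‖(I − Xᵀ(XXᵀ)⁻¹X) Σ (I − Xᵀ(XXᵀ)⁻¹X)‖_op ≤ ‖Σ − XᵀX/n‖_op. -/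
theorem stmt14 {n p : ℕ} (hn : 0 < n) (hnp : n ≤ p)
    (X : Matrix (Fin n) (Fin p) ℝ) (hrank : X.rank = n)
    (Sg : Matrix (Fin p) (Fin p) ℝ) (hSg : Sg.IsSymm) :
    l2OpNorm ((1 - Xᵀ * (X * Xᵀ)⁻¹ * X) * Sg * (1 - Xᵀ * (X * Xᵀ)⁻¹ * X)) ≤
      l2OpNorm (Sg - (n : ℝ)⁻¹ • (Xᵀ * X)) := by
  rw [l2OpNorm, l2OpNorm, l2OpNorm_eq_norm', l2OpNorm_eq_norm']
  set P : Matrix (Fin p) (Fin p) ℝ := 1 - Xᵀ * (X * Xᵀ)⁻¹ * X with hP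
  -- X * Xᵀ is invertible
  have hsurj : Function.Surjective (X * Xᵀ).mulVecLin := by
    rw [← LinearMap.range_eq_top]
    apply Submodule.eq_top_of_finrank_eq
    have h1 : (X * Xᵀ).rank = n := by
      rw [Matrix.rank_self_mul_transpose, hrank]
    have h2 : (X * Xᵀ).rank = Module.finrank ℝ (Fin n → ℝ) := by
      rw [h1, Module.finrank_fin_fun]
    simpa [Matrix.rank] using h2
  have hU : IsUnit (X * Xᵀ) := by
    rw [← Matrix.mulVec_surjective_iff_isUnit]
    intro y
    obtain ⟨v, hv⟩ := hsurj y
    exact ⟨v, hv⟩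
  have hUdet : IsUnit (X * Xᵀ).det := (Matrix.isUnit_iff_isUnit_det _).mp hU
  have hinv : (X * Xᵀ)⁻¹ * (X * Xᵀ) = 1 := Matrix.nonsing_inv_mul _ hUdet
  have hPX : P * Xᵀ = 0 := by
    have h2 : Xᵀ * (X * Xᵀ)⁻¹ * X * Xᵀ = Xᵀ * ((X * Xᵀ)⁻¹ * (X * Xᵀ)) := by
      simp [Matrix.mul_assoc]
    rw [hP, Matrix.sub_mul, Matrix.one_mul, h2, hinv, Matrix.mul_one, sub_self]
  have hPsymm : Pᵀ = P := by
    rw [hP]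
    simp [Matrix.transpose_sub, Matrix.transpose_mul, Matrix.transpose_nonsing_inv,
      Matrix.mul_assoc]
  have hz0 : P * (Xᵀ * (X * Xᵀ)⁻¹ * X) = 0 := by
    rw [show Xᵀ * (X * Xᵀ)⁻¹ * X = Xᵀ * ((X * Xᵀ)⁻¹ * X) from Matrix.mul_assoc _ _ _,
      ← Matrix.mul_assoc, hPX, Matrix.zero_mul]
  have hPP : P * P = P := by
    nth_rewrite 2 [hP]
    rw [Matrix.mul_sub, Matrix.mul_one, hz0, sub_zero]
  have hPH : Pᴴ = P := by
    rw [show Pᴴ = Pᵀ from Matrix.conjTranspose_eq_transpose_of_trivial P, hPsymm]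
  -- ‖P‖ ≤ 1
  have hnormP : ‖P‖ ≤ 1 := by
    have h2 : ‖P‖ * ‖P‖ = ‖P‖ := by
      rw [← Matrix.l2_opNorm_conjTranspose_mul_self P, hPH, hPP]
    nlinarith [norm_nonneg P]
  -- P * (Sg - c • XᵀX) * P = P * Sg * P
  have hz : P * ((n : ℝ)⁻¹ • (Xᵀ * X)) = 0 := by
    rw [Matrix.mul_smul, ← Matrix.mul_assoc, hPX, Matrix.zero_mul, smul_zero]
  have hkey : P * (Sg - (n : ℝ)⁻¹ • (Xᵀ * X)) * P = P * Sg * P := by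
    rw [Matrix.mul_sub P Sg ((n : ℝ)⁻¹ • (Xᵀ * X)),
      Matrix.sub_mul (P * Sg) (P * ((n : ℝ)⁻¹ • (Xᵀ * X))) P, hz, Matrix.zero_mul, sub_zero]
  rw [← hkey]
  set A := Sg - (n : ℝ)⁻¹ • (Xᵀ * X)
  have hA : (0 : ℝ) ≤ ‖A‖ := norm_nonneg _
  calc ‖P * A * P‖ ≤ ‖P * A‖ * ‖P‖ := Matrix.l2_opNorm_mul _ _
    _ ≤ (‖P‖ * ‖A‖) * ‖P‖ :=
        mul_le_mul_of_nonneg_right (Matrix.l2_opNorm_mul _ _) (norm_nonneg _)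
    _ ≤ ‖A‖ := by
        have h1 : ‖P‖ * ‖A‖ ≤ ‖A‖ := mul_le_of_le_one_left hA hnormP
        calc (‖P‖ * ‖A‖) * ‖P‖ ≤ ‖A‖ * 1 :=
              mul_le_mul h1 hnormP (norm_nonneg _) hA
          _ = ‖A‖ := mul_one _
end
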